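/- arXiv:1012.4994 — 2 statements merged into one kernel-verified Lean document; each statement's English description precedes it below -/
import Mathlib

section
/- For k ≥ 1, the space ℳ_k of homogeneous degree-k polynomial forms P on ℝ^m with (d+d*)P = 0 contains the direct sum (⨁_{s=0}^m H^s_k) ⊕ (⨁_{s=1}^{m-1} M_{s,k}), where M_{s,k} = [(k-1+m-s)x* - (k-1+s)x]H^s_{k-1}, and these subspaces are linearly independent. -/
open MvPolynomial Finset

noncomputable section

/-- Polynomial differential forms on ℝ^m: a coefficient polynomial for each
increasing multi-index `I ⊆ {1,…,m}` (representing `dx_I`). -/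
abbrev PForm (m : ℕ) := Finset (Fin m) → MvPolynomial (Fin m) ℝ

/-- The sign `(-1)^{#{i ∈ I : i < j}}`. -/
def sgn (m : ℕ) (j : Fin m) (I : Finset (Fin m)) : ℝ :=
  (-1 : ℝ) ^ (I.filter (fun i => i < j)).card

/-- Exterior multiplication `dx_j ∧ ·`. -/
def wedgeOp (m : ℕ) (j : Fin m) : PForm m →ₗ[ℝ] PForm m where
  toFun P I := if j ∈ I then sgn m j I • P (I.erase j) else 0
  map_add' P Q := by
    funext I; by_cases h : j ∈ I <;> simp [h, smul_add]
  map_smul' c P := by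
    funext I; by_cases h : j ∈ I <;> simp [h, smul_smul, mul_comm]

/-- Contraction (interior product) `dx_j ⌟ ·`. -/
def contrOp (m : ℕ) (j : Fin m) : PForm m →ₗ[ℝ] PForm m where
  toFun P I := if j ∈ I then 0 else sgn m j I • P (insert j I)
  map_add' P Q := by
    funext I; by_cases h : j ∈ I <;> simp [h, smul_add]
  map_smul' c P := by
    funext I; by_cases h : j ∈ I <;> simp [h, smul_smul, mul_comm]

/-- Multiplication of the coefficients by the variable `x_j`. -/
def mulXOp (m : ℕ) (j : Fin m) : PForm m →ₗ[ℝ] PForm m where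
  toFun P I := X j * P I
  map_add' P Q := by funext I; simp [mul_add]
  map_smul' c P := by funext I; simp [mul_smul_comm]

/-- Partial derivative `∂_{x_j}` of the coefficients. -/
def pderivOp (m : ℕ) (j : Fin m) : PForm m →ₗ[ℝ] PForm m where
  toFun P I := pderiv j (P I)
  map_add' P Q := by funext I; simp
  map_smul' c P := by funext I; simp

/-- `x = -∑_j x_j dx_j ∧`. -/
def xOp (m : ℕ) : PForm m →ₗ[ℝ] PForm m := - ∑ j, mulXOp m j ∘ₗ wedgeOp m j

/-- `x* = ∑_j x_j dx_j ⌟`. -/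
def xStarOp (m : ℕ) : PForm m →ₗ[ℝ] PForm m := ∑ j, mulXOp m j ∘ₗ contrOp m j

/-- The de Rham differential `d = ∑_j ∂_{x_j} dx_j ∧`. -/
def dOp (m : ℕ) : PForm m →ₗ[ℝ] PForm m := ∑ j, wedgeOp m j ∘ₗ pderivOp m j

/-- Its formal adjoint `d* = -∑_j ∂_{x_j} dx_j ⌟`. -/
def dStarOp (m : ℕ) : PForm m →ₗ[ℝ] PForm m := - ∑ j, contrOp m j ∘ₗ pderivOp m j

/-- The Euler operator `E = ∑_j x_j ∂_{x_j}`. -/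
def eulerOp (m : ℕ) : PForm m →ₗ[ℝ] PForm m := ∑ j, mulXOp m j ∘ₗ pderivOp m j

/-- The skew Euler operator `Ê = ∑_j (dx_j∧)(dx_j⌟)`. -/
def skewEulerOp (m : ℕ) : PForm m →ₗ[ℝ] PForm m := ∑ j, wedgeOp m j ∘ₗ contrOp m j

/-- The componentwise Laplacian `Δ = ∑_j ∂²_{x_j}`. -/
def lapOp (m : ℕ) : PForm m →ₗ[ℝ] PForm m := ∑ j, pderivOp m j ∘ₗ pderivOp m j

/-- Multiplication by `r² = x_1² + ⋯ + x_m²`. -/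
def r2Op (m : ℕ) : PForm m →ₗ[ℝ] PForm m := ∑ j, mulXOp m j ∘ₗ mulXOp m j

/-- `P` is an `s`-form: only components `dx_I` with `|I| = s` occur. -/
def IsSForm (m s : ℕ) (P : PForm m) : Prop := ∀ I : Finset (Fin m), I.card ≠ s → P I = 0

/-- All coefficients of `P` are homogeneous polynomials of degree `k`. -/
def IsHomForm (m k : ℕ) (P : PForm m) : Prop := ∀ I : Finset (Fin m), (P I).IsHomogeneous k

/-- `H^s_k`: homogeneous polynomial `s`-forms of degree `k` solving the
Hodge–de Rham system `dP = 0`, `d*P = 0`. -/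
def Hset (m s k : ℕ) : Set (PForm m) :=
  {P | IsSForm m s P ∧ IsHomForm m k P ∧ dOp m P = 0 ∧ dStarOp m P = 0}

/-- `ℳ_k`: homogeneous degree-`k` polynomial forms with `(d + d*)P = 0`. -/
def Mk (m k : ℕ) : Set (PForm m) :=
  {P | IsHomForm m k P ∧ (dOp m + dStarOp m) P = 0}

/-- `M_{s,k} = [(k-1+m-s)x* - (k-1+s)x] H^s_{k-1}`. -/
def Mset (m s k : ℕ) : Set (PForm m) :=
  (⇑(((k : ℝ) - 1 + m - s) • xStarOp m - ((k : ℝ) - 1 + s) • xOp m)) '' Hset m s (k - 1)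

end
noncomputable section Aux

open Finset

variable {m : ℕ}

/-! ### Pointwise descriptions of the basic operators -/

lemma wedgeOp_apply (j : Fin m) (P : PForm m) (I : Finset (Fin m)) :
    wedgeOp m j P I = if j ∈ I then sgn m j I • P (I.erase j) else 0 := rfl

lemma contrOp_apply (j : Fin m) (P : PForm m) (I : Finset (Fin m)) :
    contrOp m j P I = if j ∈ I then 0 else sgn m j I • P (insert j I) := rfl

lemma mulXOp_apply (j : Fin m) (P : PForm m) (I : Finset (Fin m)) :
    mulXOp m j P I = X j * P I := rfl

lemma pderivOp_apply (j : Fin m) (P : PForm m) (I : Finset (Fin m)) :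
    pderivOp m j P I = pderiv j (P I) := rfl

/-! ### Sign lemmas -/

lemma sgn_sq (j : Fin m) (I : Finset (Fin m)) : sgn m j I * sgn m j I = 1 := by
  rw [sgn, ← pow_add, ← two_mul, pow_mul]
  norm_num

lemma sgn_erase_self (j : Fin m) (I : Finset (Fin m)) : sgn m j (I.erase j) = sgn m j I := by
  unfold sgn
  rw [Finset.filter_erase, Finset.erase_eq_of_notMem (by simp)]

lemma sgn_insert_self (j : Fin m) (I : Finset (Fin m)) : sgn m j (insert j I) = sgn m j I := by
  unfold sgn
  rw [Finset.filter_insert, if_neg (by simp)]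

lemma sgn_insert {j l : Fin m} (hjl : j ≠ l) {I : Finset (Fin m)} (hj : j ∉ I) :
    sgn m l (insert j I) = (if j < l then -1 else 1) * sgn m l I := by
  unfold sgn
  rw [Finset.filter_insert]
  by_cases h : j < l
  · rw [if_pos h, if_pos h, Finset.card_insert_of_notMem (by simp [hj]), pow_succ]
    ring
  · rw [if_neg h, if_neg h, one_mul]

lemma sgn_erase {j l : Fin m} (hjl : j ≠ l) {I : Finset (Fin m)} (hj : j ∈ I) :
    sgn m l (I.erase j) = (if j < l then -1 else 1) * sgn m l I := by
  have h2 := sgn_insert (m := m) hjl (Finset.notMem_erase j I) (I := I.erase j)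
  rw [Finset.insert_erase hj] at h2
  rw [h2]
  by_cases h : j < l <;> simp [h]

/-! ### Anticommutation relations for wedge and contraction -/

lemma wedge_contr (j l : Fin m) (P : PForm m) :
    wedgeOp m j (contrOp m l P) + contrOp m l (wedgeOp m j P)
      = if j = l then P else 0 := by
  funext I
  show (if j ∈ I then sgn m j I • contrOp m l P (I.erase j) else 0)
      + (if l ∈ I then 0 else sgn m l I • wedgeOp m j P (insert l I)) = _
  by_cases hjl : j = l
  · subst hjl
    rw [if_pos rfl]
    by_cases hj : j ∈ I
    · rw [if_pos hj, if_pos hj, contrOp_apply, if_neg (Finset.notMem_erase j I),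
        Finset.insert_erase hj, sgn_erase_self, smul_smul, sgn_sq, one_smul, add_zero]
    · rw [if_neg hj, if_neg hj, wedgeOp_apply, if_pos (Finset.mem_insert_self j I),
        Finset.erase_insert hj, sgn_insert_self, smul_smul, sgn_sq, one_smul, zero_add]
  · rw [if_neg hjl]
    have hlj : l ≠ j := Ne.symm hjl
    by_cases hj : j ∈ I <;> by_cases hl : l ∈ I
    · rw [if_pos hj, if_pos hl, contrOp_apply,
        if_pos (Finset.mem_erase.2 ⟨hlj, hl⟩), smul_zero, add_zero]
      rfl
    · rw [if_pos hj, if_neg hl, contrOp_apply,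
        if_neg (fun h => hl (Finset.mem_of_mem_erase h)), wedgeOp_apply,
        if_pos (Finset.mem_insert_of_mem hj), ← Finset.erase_insert_of_ne hlj,
        smul_smul, smul_smul, sgn_erase hjl hj, sgn_insert hlj hl, ← add_smul]
      have hc : sgn m j I * ((if j < l then -1 else 1) * sgn m l I)
          + sgn m l I * ((if l < j then -1 else 1) * sgn m j I) = 0 := by
        rcases lt_or_gt_of_ne (show j ≠ l from hjl) with h | h
        · rw [if_pos h, if_neg (asymm h)]; ring
        · rw [if_neg (asymm h), if_pos h]; ring
      rw [hc, zero_smul]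
      rfl
    · rw [if_neg hj, if_pos hl, zero_add]
      rfl
    · rw [if_neg hj, if_neg hl, wedgeOp_apply,
        if_neg (by simp [Finset.mem_insert, hjl, hj]), smul_zero, zero_add]
      rfl

lemma wedge_wedge (j l : Fin m) (P : PForm m) :
    wedgeOp m j (wedgeOp m l P) + wedgeOp m l (wedgeOp m j P) = 0 := by
  funext I
  show (if j ∈ I then sgn m j I • wedgeOp m l P (I.erase j) else 0)
      + (if l ∈ I then sgn m l I • wedgeOp m j P (I.erase l) else 0) = 0
  by_cases hjl : j = l
  · subst hjl
    by_cases hj : j ∈ I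
    · rw [if_pos hj, wedgeOp_apply, if_neg (Finset.notMem_erase j I), smul_zero, add_zero]
    · rw [if_neg hj, add_zero]
  · have hlj : l ≠ j := Ne.symm hjl
    by_cases hj : j ∈ I <;> by_cases hl : l ∈ I
    · rw [if_pos hj, if_pos hl, wedgeOp_apply, wedgeOp_apply,
        if_pos (Finset.mem_erase.2 ⟨hlj, hl⟩), if_pos (Finset.mem_erase.2 ⟨hjl, hj⟩),
        smul_smul, smul_smul, sgn_erase hjl hj, sgn_erase hlj hl,
        Finset.erase_right_comm (a := j) (b := l), ← add_smul]
      have hc : sgn m j I * ((if j < l then -1 else 1) * sgn m l I)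
          + sgn m l I * ((if l < j then -1 else 1) * sgn m j I) = 0 := by
        rcases lt_or_gt_of_ne (show j ≠ l from hjl) with h | h
        · rw [if_pos h, if_neg (asymm h)]; ring
        · rw [if_neg (asymm h), if_pos h]; ring
      rw [hc, zero_smul]
    · rw [if_pos hj, if_neg hl, wedgeOp_apply,
        if_neg (fun h => hl (Finset.mem_of_mem_erase h)), smul_zero, add_zero]
    · rw [if_neg hj, if_pos hl, wedgeOp_apply,
        if_neg (fun h => hj (Finset.mem_of_mem_erase h)), smul_zero, zero_add]
    · rw [if_neg hj, if_neg hl, add_zero]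

lemma contr_contr (j l : Fin m) (P : PForm m) :
    contrOp m j (contrOp m l P) + contrOp m l (contrOp m j P) = 0 := by
  funext I
  show (if j ∈ I then 0 else sgn m j I • contrOp m l P (insert j I))
      + (if l ∈ I then 0 else sgn m l I • contrOp m j P (insert l I)) = 0
  by_cases hjl : j = l
  · subst hjl
    by_cases hj : j ∈ I
    · rw [if_pos hj, add_zero]
    · rw [if_neg hj, contrOp_apply, if_pos (Finset.mem_insert_self j I), smul_zero, add_zero]
  · have hlj : l ≠ j := Ne.symm hjl
    by_cases hj : j ∈ I <;> by_cases hl : l ∈ I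
    · rw [if_pos hj, if_pos hl, add_zero]
    · rw [if_pos hj, if_neg hl, contrOp_apply,
        if_pos (Finset.mem_insert_of_mem hj), smul_zero, zero_add]
    · rw [if_neg hj, if_pos hl, contrOp_apply,
        if_pos (Finset.mem_insert_of_mem hl), smul_zero, add_zero]
    · rw [if_neg hj, if_neg hl, contrOp_apply, contrOp_apply,
        if_neg (by simp [Finset.mem_insert, hlj, hl]),
        if_neg (by simp [Finset.mem_insert, hjl, hj]),
        smul_smul, smul_smul, sgn_insert hjl hj, sgn_insert hlj hl,
        Finset.insert_comm l j, ← add_smul]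
      have hc : sgn m j I * ((if j < l then -1 else 1) * sgn m l I)
          + sgn m l I * ((if l < j then -1 else 1) * sgn m j I) = 0 := by
        rcases lt_or_gt_of_ne (show j ≠ l from hjl) with h | h
        · rw [if_pos h, if_neg (asymm h)]; ring
        · rw [if_neg (asymm h), if_pos h]; ring
      rw [hc, zero_smul]

lemma wedge_wedge_self (j : Fin m) (P : PForm m) :
    wedgeOp m j (wedgeOp m j P) = 0 := by
  funext I
  rw [wedgeOp_apply]
  split
  · rw [wedgeOp_apply, if_neg (Finset.notMem_erase j I), smul_zero]; rfl
  · rfl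

lemma contr_contr_self (j : Fin m) (P : PForm m) :
    contrOp m j (contrOp m j P) = 0 := by
  funext I
  rw [contrOp_apply]
  split
  · rfl
  · rw [contrOp_apply, if_pos (Finset.mem_insert_self j I), smul_zero]; rfl

/-! ### Commutation of `pderiv`/`mulX` with the exterior operators -/

lemma pderiv_mulX (j l : Fin m) (P : PForm m) :
    pderivOp m j (mulXOp m l P)
      = mulXOp m l (pderivOp m j P) + if j = l then P else 0 := by
  by_cases h : j = l
  · subst h
    rw [if_pos rfl]
    funext I
    rw [Pi.add_apply, pderivOp_apply, mulXOp_apply, mulXOp_apply, pderivOp_apply,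
      pderiv_mul, pderiv_X_self, one_mul]
    ring
  · rw [if_neg h, add_zero]
    funext I
    rw [pderivOp_apply, mulXOp_apply, mulXOp_apply, pderivOp_apply,
      pderiv_mul, pderiv_X_of_ne (Ne.symm h), zero_mul, zero_add]

lemma wedge_mulX (j l : Fin m) (P : PForm m) :
    wedgeOp m j (mulXOp m l P) = mulXOp m l (wedgeOp m j P) := by
  funext I
  show (if j ∈ I then sgn m j I • (X l * P (I.erase j)) else 0)
      = X l * (if j ∈ I then sgn m j I • P (I.erase j) else 0)
  by_cases h : j ∈ I <;> simp [h, mul_smul_comm]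

lemma contr_mulX (j l : Fin m) (P : PForm m) :
    contrOp m j (mulXOp m l P) = mulXOp m l (contrOp m j P) := by
  funext I
  show (if j ∈ I then 0 else sgn m j I • (X l * P (insert j I)))
      = X l * (if j ∈ I then 0 else sgn m j I • P (insert j I))
  by_cases h : j ∈ I <;> simp [h, mul_smul_comm]

lemma pderiv_wedge (j l : Fin m) (P : PForm m) :
    pderivOp m j (wedgeOp m l P) = wedgeOp m l (pderivOp m j P) := by
  funext I
  show pderiv j (if l ∈ I then sgn m l I • P (I.erase l) else 0)
      = if l ∈ I then sgn m l I • pderiv j (P (I.erase l)) else 0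
  by_cases h : l ∈ I <;> simp [h]

lemma pderiv_contr (j l : Fin m) (P : PForm m) :
    pderivOp m j (contrOp m l P) = contrOp m l (pderivOp m j P) := by
  funext I
  show pderiv j (if l ∈ I then 0 else sgn m l I • P (insert l I))
      = if l ∈ I then 0 else sgn m l I • pderiv j (P (insert l I))
  by_cases h : l ∈ I <;> simp [h]

/-! ### Pointwise formulas for the composite operators -/

lemma dOp_apply (P : PForm m) :
    dOp m P = ∑ j, wedgeOp m j (pderivOp m j P) := by
  change (∑ j, wedgeOp m j ∘ₗ pderivOp m j) P = _
  rw [LinearMap.sum_apply]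
  rfl

lemma dStarOp_apply (P : PForm m) :
    dStarOp m P = -∑ j, contrOp m j (pderivOp m j P) := by
  change (-∑ j, contrOp m j ∘ₗ pderivOp m j) P = _
  rw [LinearMap.neg_apply, LinearMap.sum_apply]
  rfl

lemma xOp_apply (P : PForm m) :
    xOp m P = -∑ j, mulXOp m j (wedgeOp m j P) := by
  change (-∑ j, mulXOp m j ∘ₗ wedgeOp m j) P = _
  rw [LinearMap.neg_apply, LinearMap.sum_apply]
  rfl

lemma xStarOp_apply (P : PForm m) :
    xStarOp m P = ∑ j, mulXOp m j (contrOp m j P) := by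
  change (∑ j, mulXOp m j ∘ₗ contrOp m j) P = _
  rw [LinearMap.sum_apply]
  rfl

lemma eulerOp_apply (P : PForm m) :
    eulerOp m P = ∑ j, mulXOp m j (pderivOp m j P) := by
  change (∑ j, mulXOp m j ∘ₗ pderivOp m j) P = _
  rw [LinearMap.sum_apply]
  rfl

lemma skewEulerOp_apply (P : PForm m) :
    skewEulerOp m P = ∑ j, wedgeOp m j (contrOp m j P) := by
  change (∑ j, wedgeOp m j ∘ₗ contrOp m j) P = _
  rw [LinearMap.sum_apply]
  rfl

/-! ### The generic double-sum anticommutator computation -/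

lemma generic_comm (C D : Fin m → (PForm m →ₗ[ℝ] PForm m)) (R : Fin m → PForm m → PForm m)
    (hCD : ∀ j l Q, C j (D l Q) + D l (C j Q) = if j = l then R j Q else 0)
    (hpD : ∀ j l Q, pderivOp m j (D l Q) = D l (pderivOp m j Q))
    (hCx : ∀ j l Q, C j (mulXOp m l Q) = mulXOp m l (C j Q))
    (P : PForm m) :
    (∑ j, C j (pderivOp m j (∑ l, mulXOp m l (D l P))))
      + (∑ l, mulXOp m l (D l (∑ j, C j (pderivOp m j P))))
    = ∑ j, (mulXOp m j (R j (pderivOp m j P)) + C j (D j P)) := by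
  have key : ∀ j l : Fin m,
      C j (pderivOp m j (mulXOp m l (D l P))) + mulXOp m l (D l (C j (pderivOp m j P)))
      = if j = l then mulXOp m j (R j (pderivOp m j P)) + C j (D j P) else 0 := by
    intro j l
    by_cases h : j = l
    · subst h
      rw [if_pos rfl, pderiv_mulX, if_pos rfl, map_add, hCx, hpD]
      have h2 := hCD j j (pderivOp m j P)
      rw [if_pos rfl] at h2
      rw [← h2, map_add]
      abel
    · rw [if_neg h, pderiv_mulX, if_neg h, add_zero, hCx, hpD,
        ← map_add (mulXOp m l), hCD, if_neg h, map_zero]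
  calc (∑ j, C j (pderivOp m j (∑ l, mulXOp m l (D l P))))
        + (∑ l, mulXOp m l (D l (∑ j, C j (pderivOp m j P))))
      = (∑ j, ∑ l, C j (pderivOp m j (mulXOp m l (D l P))))
        + (∑ l, ∑ j, mulXOp m l (D l (C j (pderivOp m j P)))) := by
        simp only [map_sum]
    _ = ∑ j, ∑ l, (C j (pderivOp m j (mulXOp m l (D l P)))
          + mulXOp m l (D l (C j (pderivOp m j P)))) := by
        rw [Finset.sum_comm (s := Finset.univ) (t := Finset.univ)
          (f := fun l j => mulXOp m l (D l (C j (pderivOp m j P)))), ← Finset.sum_add_distrib]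
        exact Finset.sum_congr rfl fun j _ => (Finset.sum_add_distrib).symm
    _ = ∑ j, (mulXOp m j (R j (pderivOp m j P)) + C j (D j P)) := by
        refine Finset.sum_congr rfl fun j _ => ?_
        simp only [key]
        exact Fintype.sum_ite_eq j _

/-! ### The four anticommutation identities -/

lemma d_xStar (P : PForm m) :
    dOp m (xStarOp m P) + xStarOp m (dOp m P) = eulerOp m P + skewEulerOp m P := by
  have h := generic_comm (fun j => wedgeOp m j) (fun l => contrOp m l) (fun _ Q => Q)
    wedge_contr pderiv_contr wedge_mulX P
  rw [xStarOp_apply P, dOp_apply, dOp_apply P, xStarOp_apply, eulerOp_apply, skewEulerOp_apply,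
    h, Finset.sum_add_distrib]

lemma d_x (P : PForm m) :
    dOp m (xOp m P) + xOp m (dOp m P) = 0 := by
  have h := generic_comm (fun j => wedgeOp m j) (fun l => wedgeOp m l) (fun _ _ => 0)
    (fun j l Q => by rw [wedge_wedge]; simp) pderiv_wedge wedge_mulX P
  rw [xOp_apply P, map_neg, dOp_apply, dOp_apply P, xOp_apply, ← neg_add, h]
  simp [wedge_wedge_self]

lemma dStar_x (P : PForm m) :
    dStarOp m (xOp m P) + xOp m (dStarOp m P)
      = eulerOp m P + (m : ℝ) • P - skewEulerOp m P := by
  have h := generic_comm (fun j => contrOp m j) (fun l => wedgeOp m l) (fun _ Q => Q)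
    (fun j l Q => by rw [add_comm, wedge_contr]; simp [eq_comm]) pderiv_wedge contr_mulX P
  rw [xOp_apply P, map_neg, dStarOp_apply, neg_neg, dStarOp_apply P, map_neg (xOp m),
    xOp_apply, neg_neg, h]
  have hcw : ∀ j, contrOp m j (wedgeOp m j P) = P - wedgeOp m j (contrOp m j P) := by
    intro j
    have h2 := wedge_contr j j P
    rw [if_pos rfl] at h2
    exact eq_sub_of_add_eq' h2
  simp only [hcw]
  rw [eulerOp_apply, skewEulerOp_apply]
  rw [Finset.sum_add_distrib, Finset.sum_sub_distrib, Finset.sum_const, Finset.card_univ,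
    Fintype.card_fin, Nat.cast_smul_eq_nsmul]
  abel

lemma dStar_xStar (P : PForm m) :
    dStarOp m (xStarOp m P) + xStarOp m (dStarOp m P) = 0 := by
  have h := generic_comm (fun j => contrOp m j) (fun l => contrOp m l) (fun _ _ => 0)
    (fun j l Q => by rw [contr_contr]; simp) pderiv_contr contr_mulX P
  rw [xStarOp_apply P, dStarOp_apply, dStarOp_apply P, map_neg (xStarOp m), xStarOp_apply,
    ← neg_add, h]
  simp [contr_contr_self]

/-! ### Euler identities -/

lemma euler_mono (v : Fin m →₀ ℕ) (c : ℝ) :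
    ∑ j, X j * pderiv j (monomial v c) = ((∑ j, v j : ℕ) : ℝ) • monomial v c := by
  have hterm : ∀ j : Fin m, X j * pderiv j (monomial v c) = monomial v (c * (v j : ℝ)) := by
    intro j
    rw [pderiv_monomial]
    by_cases h : v j = 0
    · rw [h]; simp
    · have hv : Finsupp.single j 1 + (v - Finsupp.single j 1) = v := by
        ext a
        rcases eq_or_ne a j with rfl | ha
        · simp only [Finsupp.add_apply, Finsupp.tsub_apply, Finsupp.single_eq_same]
          omega
        · simp [Finsupp.single_eq_of_ne' (Ne.symm ha), Finsupp.add_apply, Finsupp.tsub_apply]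
      calc X j * (monomial (v - Finsupp.single j 1)) (c * (v j : ℝ))
          = monomial (Finsupp.single j 1 + (v - Finsupp.single j 1)) (c * (v j : ℝ)) := by
            rw [monomial_single_add, pow_one]
        _ = monomial v (c * (v j : ℝ)) := by rw [hv]
  simp_rw [hterm]
  rw [← map_sum, ← map_smul]
  congr 1
  rw [← Finset.mul_sum, smul_eq_mul]
  push_cast
  ring

lemma euler_poly {n : ℕ} {p : MvPolynomial (Fin m) ℝ} (hp : p.IsHomogeneous n) :
    ∑ j, X j * pderiv j p = (n : ℝ) • p := by
  have hdeg : ∀ v ∈ p.support, ∑ j, v j = n := by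
    intro v hv
    have h1 := hp (MvPolynomial.mem_support_iff.mp hv)
    rw [← h1, Finsupp.weight_apply, Finsupp.sum]
    simp only [Pi.one_apply, smul_eq_mul, mul_one]
    exact (Finset.sum_subset (Finset.subset_univ _)
      (fun j _ hj => Finsupp.notMem_support_iff.mp hj)).symm
  conv_lhs => rw [p.as_sum]
  conv_rhs => rw [p.as_sum]
  rw [Finset.smul_sum]
  simp_rw [map_sum, Finset.mul_sum]
  rw [Finset.sum_comm]
  refine Finset.sum_congr rfl fun v hv => ?_
  rw [euler_mono, hdeg v hv]

lemma eulerOp_eq {t : ℕ} {P : PForm m} (hP : IsHomForm m t P) :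
    eulerOp m P = (t : ℝ) • P := by
  funext I
  rw [eulerOp_apply, Finset.sum_apply, Pi.smul_apply]
  simp_rw [mulXOp_apply, pderivOp_apply]
  exact euler_poly (hP I)

lemma skewEulerOp_eq {s : ℕ} {P : PForm m} (hP : IsSForm m s P) :
    skewEulerOp m P = (s : ℝ) • P := by
  funext I
  rw [skewEulerOp_apply, Finset.sum_apply, Pi.smul_apply]
  have hterm : ∀ j, wedgeOp m j (contrOp m j P) I = if j ∈ I then P I else 0 := by
    intro j
    rw [wedgeOp_apply]
    by_cases hj : j ∈ I
    · rw [if_pos hj, if_pos hj, contrOp_apply, if_neg (Finset.notMem_erase j I),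
        Finset.insert_erase hj, sgn_erase_self, smul_smul, sgn_sq, one_smul]
    · rw [if_neg hj, if_neg hj]
  simp_rw [hterm]
  rw [Finset.sum_ite_mem, Finset.univ_inter, Finset.sum_const]
  by_cases hI : I.card = s
  · rw [hI, Nat.cast_smul_eq_nsmul]
  · rw [hP I hI, smul_zero, smul_zero]

/-! ### Consequences for elements of `Hset` -/

lemma d_xStar_of_H {s t : ℕ} {Q : PForm m} (hQ : Q ∈ Hset m s t) :
    dOp m (xStarOp m Q) = ((t : ℝ) + s) • Q := by
  obtain ⟨hs, hh, hd, hds⟩ := hQ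
  have h2 := d_xStar (m := m) Q
  rw [hd, map_zero, add_zero] at h2
  rw [h2, eulerOp_eq hh, skewEulerOp_eq hs, ← add_smul]

lemma d_x_of_H {Q : PForm m} (hd : dOp m Q = 0) : dOp m (xOp m Q) = 0 := by
  have h2 := d_x (m := m) Q
  rw [hd, map_zero, add_zero] at h2
  exact h2

lemma dStar_x_of_H {s t : ℕ} {Q : PForm m} (hQ : Q ∈ Hset m s t) :
    dStarOp m (xOp m Q) = ((t : ℝ) + m - s) • Q := by
  obtain ⟨hs, hh, hd, hds⟩ := hQ
  have h2 := dStar_x (m := m) Q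
  rw [hds, map_zero, add_zero] at h2
  rw [h2, eulerOp_eq hh, skewEulerOp_eq hs, ← add_smul, ← sub_smul]

lemma dStar_xStar_of_H {Q : PForm m} (hds : dStarOp m Q = 0) :
    dStarOp m (xStarOp m Q) = 0 := by
  have h2 := dStar_xStar (m := m) Q
  rw [hds, map_zero, add_zero] at h2
  exact h2

/-! ### Homogeneity of the image forms -/

lemma isHomForm_xStar {t : ℕ} {P : PForm m} (hP : IsHomForm m t P) :
    IsHomForm m (t + 1) (xStarOp m P) := by
  intro I
  rw [xStarOp_apply, Finset.sum_apply]
  apply MvPolynomial.IsHomogeneous.sum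
  intro j _
  rw [mulXOp_apply]
  have h2 : (contrOp m j P I).IsHomogeneous t := by
    rw [contrOp_apply]
    split
    · exact MvPolynomial.isHomogeneous_zero _ _ _
    · exact (homogeneousSubmodule (Fin m) ℝ t).smul_mem _ (hP _)
  have h3 := (MvPolynomial.isHomogeneous_X ℝ j).mul h2
  rwa [Nat.add_comm] at h3

lemma isHomForm_x {t : ℕ} {P : PForm m} (hP : IsHomForm m t P) :
    IsHomForm m (t + 1) (xOp m P) := by
  intro I
  rw [xOp_apply, Pi.neg_apply, Finset.sum_apply]
  apply (homogeneousSubmodule (Fin m) ℝ (t + 1)).neg_mem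
  apply MvPolynomial.IsHomogeneous.sum
  intro j _
  rw [mulXOp_apply]
  have h2 : (wedgeOp m j P I).IsHomogeneous t := by
    rw [wedgeOp_apply]
    split
    · exact (homogeneousSubmodule (Fin m) ℝ t).smul_mem _ (hP _)
    · exact MvPolynomial.isHomogeneous_zero _ _ _
  have h3 := (MvPolynomial.isHomogeneous_X ℝ j).mul h2
  rwa [Nat.add_comm] at h3

/-! ### Forms of distinct degrees are independent -/

lemma isSForm_smul {s : ℕ} {c : ℝ} {P : PForm m} (h : IsSForm m s P) :
    IsSForm m s (c • P) := fun I hI => by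
  rw [Pi.smul_apply, h I hI, smul_zero]

lemma sform_sum_eq_zero {T : Finset ℕ} {f : ℕ → PForm m}
    (hf : ∀ s ∈ T, IsSForm m s (f s)) (h0 : ∑ s ∈ T, f s = 0) :
    ∀ s ∈ T, f s = 0 := by
  intro s hs
  funext I
  by_cases hI : I.card = s
  · have h1 := congrFun h0 I
    rw [Finset.sum_apply] at h1
    rw [Finset.sum_eq_single s (fun t ht hts => hf t ht I (by rw [hI]; exact fun h => hts h.symm))
      (fun h => absurd hs h)] at h1
    exact h1
  · exact hf s hs I hI

end Aux
/-- `ℳ_k` contains `(⨁_{s=0}^m H^s_k) ⊕ (⨁_{s=1}^{m-1} M_{s,k})`,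
and these subspaces are linearly independent. -/
theorem Mk_contains_direct_sum (m k : ℕ) (hk : 1 ≤ k) :
    (∀ s ≤ m, Hset m s k ⊆ Mk m k) ∧
    (∀ s, 1 ≤ s → s ≤ m - 1 → Mset m s k ⊆ Mk m k) ∧
    (∀ h w : ℕ → PForm m,
      (∀ s ≤ m, h s ∈ Hset m s k) →
      (∀ s, 1 ≤ s → s ≤ m - 1 → w s ∈ Mset m s k) →
      (∑ s ∈ Finset.range (m + 1), h s) + (∑ s ∈ Finset.Icc 1 (m - 1), w s) = 0 →
      (∀ s ≤ m, h s = 0) ∧ (∀ s, 1 ≤ s → s ≤ m - 1 → w s = 0)) := by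
  have hk' : ((k - 1 : ℕ) : ℝ) = (k : ℝ) - 1 := by
    rw [Nat.cast_sub hk, Nat.cast_one]
  refine ⟨?_, ?_, ?_⟩
  · rintro s hs P ⟨hsf, hh, hd, hds⟩
    exact ⟨hh, by rw [LinearMap.add_apply, hd, hds, add_zero]⟩
  · rintro s hs1 hs2 P ⟨Q, hQ, rfl⟩
    constructor
    · intro I
      have h1 : IsHomForm m (k - 1 + 1) (xStarOp m Q) := isHomForm_xStar hQ.2.1
      have h2 : IsHomForm m (k - 1 + 1) (xOp m Q) := isHomForm_x hQ.2.1
      have hk1 : k - 1 + 1 = k := by omega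
      rw [hk1] at h1 h2
      rw [LinearMap.sub_apply, LinearMap.smul_apply, LinearMap.smul_apply, Pi.sub_apply,
        Pi.smul_apply, Pi.smul_apply]
      exact (homogeneousSubmodule (Fin m) ℝ k).sub_mem
        ((homogeneousSubmodule (Fin m) ℝ k).smul_mem _ (h1 I))
        ((homogeneousSubmodule (Fin m) ℝ k).smul_mem _ (h2 I))
    · rw [LinearMap.add_apply, LinearMap.sub_apply, LinearMap.smul_apply, LinearMap.smul_apply,
        map_sub, map_sub, map_smul, map_smul, map_smul, map_smul,
        d_xStar_of_H hQ, d_x_of_H hQ.2.2.1, dStar_x_of_H hQ, dStar_xStar_of_H hQ.2.2.2,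
        smul_zero, smul_zero, sub_zero, zero_sub, smul_smul, smul_smul,
        ← sub_eq_add_neg, ← sub_smul]
      rw [show ((k : ℝ) - 1 + ↑m - ↑s) * (((k - 1 : ℕ) : ℝ) + ↑s)
          - ((k : ℝ) - 1 + ↑s) * (((k - 1 : ℕ) : ℝ) + ↑m - ↑s) = 0 by rw [hk']; ring,
        zero_smul]
  · intro h w hh hw heq
    have hwex : ∀ s, ∃ Q : PForm m, 1 ≤ s → s ≤ m - 1 →
        Q ∈ Hset m s (k - 1) ∧
        w s = (((k : ℝ) - 1 + m - s) • xStarOp m - ((k : ℝ) - 1 + s) • xOp m) Q := by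
      intro s
      by_cases hs : 1 ≤ s ∧ s ≤ m - 1
      · obtain ⟨Q, hQ, hQw⟩ := hw s hs.1 hs.2
        exact ⟨Q, fun _ _ => ⟨hQ, hQw.symm⟩⟩
      · exact ⟨0, fun h1 h2 => absurd ⟨h1, h2⟩ hs⟩
    choose Q hQ using hwex
    have hdw : ∀ s ∈ Finset.Icc 1 (m - 1), dOp m (w s)
        = (((k : ℝ) - 1 + m - s) * ((k : ℝ) - 1 + s)) • Q s := by
      intro s hs
      rw [Finset.mem_Icc] at hs
      obtain ⟨hQH, hws⟩ := hQ s hs.1 hs.2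
      rw [hws, LinearMap.sub_apply, LinearMap.smul_apply, LinearMap.smul_apply,
        map_sub, map_smul, map_smul, d_xStar_of_H hQH, d_x_of_H hQH.2.2.1,
        smul_zero, sub_zero, smul_smul, hk']
    have h0 : ∑ s ∈ Finset.Icc 1 (m - 1),
        ((((k : ℝ) - 1 + m - s) * ((k : ℝ) - 1 + s)) • Q s) = 0 := by
      have h1 := congrArg (dOp m) heq
      rw [map_zero, map_add, map_sum, map_sum,
        Finset.sum_eq_zero (fun s hs => (hh s (by
          rw [Finset.mem_range] at hs; omega)).2.2.1),
        zero_add, Finset.sum_congr rfl hdw] at h1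
      exact h1
    have hQ0 : ∀ s, 1 ≤ s → s ≤ m - 1 → Q s = 0 := by
      intro s hs1 hs2
      have hall := sform_sum_eq_zero (f := fun s =>
          (((k : ℝ) - 1 + m - s) * ((k : ℝ) - 1 + s)) • Q s)
        (fun t ht => by
          rw [Finset.mem_Icc] at ht
          exact isSForm_smul (hQ t ht.1 ht.2).1.1) h0 s (Finset.mem_Icc.mpr ⟨hs1, hs2⟩)
      have hc : (((k : ℝ) - 1 + m - s) * ((k : ℝ) - 1 + s)) ≠ 0 := by
        have h1k : (1 : ℝ) ≤ k := by exact_mod_cast hk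
        have hsm : (s : ℝ) + 1 ≤ m := by exact_mod_cast (show s + 1 ≤ m by omega)
        have hs1' : (1 : ℝ) ≤ s := by exact_mod_cast hs1
        have hpos1 : (0 : ℝ) < (k : ℝ) - 1 + m - s := by linarith
        have hpos2 : (0 : ℝ) < (k : ℝ) - 1 + s := by linarith
        exact ne_of_gt (mul_pos hpos1 hpos2)
      have hQs : Q s = (((k : ℝ) - 1 + m - s) * ((k : ℝ) - 1 + s))⁻¹
          • ((((k : ℝ) - 1 + m - s) * ((k : ℝ) - 1 + s)) • Q s) := by
        rw [smul_smul, inv_mul_cancel₀ hc, one_smul]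
      have hall' : (((k : ℝ) - 1 + m - s) * ((k : ℝ) - 1 + s)) • Q s = 0 := hall
      rw [hQs, hall', smul_zero]
    have hw0 : ∀ s, 1 ≤ s → s ≤ m - 1 → w s = 0 := by
      intro s hs1 hs2
      obtain ⟨_, hws⟩ := hQ s hs1 hs2
      rw [hws, hQ0 s hs1 hs2, map_zero]
    refine ⟨?_, hw0⟩
    have heq2 : ∑ s ∈ Finset.range (m + 1), h s = 0 := by
      have hz : ∑ s ∈ Finset.Icc 1 (m - 1), w s = 0 :=
        Finset.sum_eq_zero fun s hs => by
          rw [Finset.mem_Icc] at hs; exact hw0 s hs.1 hs.2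
      rwa [hz, add_zero] at heq
    intro s hs
    exact sform_sum_eq_zero
      (fun t ht => (hh t (by rw [Finset.mem_range] at ht; omega)).1) heq2 s
      (Finset.mem_range.mpr (by omega))
end

section
/- For k ≥ 1 the kernel of the Laplacian on homogeneous degree-k polynomial forms decomposes as Ker_k Δ = ℳ_k ⊕ (x+x*)ℳ_{k-1}, where ℳ_j = {homogeneous degree-j polynomial forms P : (d+d*)P = 0}. -/
open MvPolynomial Finset

noncomputable section
namespace KL
variable {m : ℕ}

lemma sgn_sq (j : Fin m) (I : Finset (Fin m)) : sgn m j I * sgn m j I = 1 := by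
  rw [sgn, ← pow_add]
  exact Even.neg_one_pow ⟨_, rfl⟩

lemma sgn_erase_of_not_lt {j k : Fin m} (h : ¬ j < k) (I : Finset (Fin m)) :
    sgn m k (I.erase j) = sgn m k I := by
  unfold sgn
  rw [Finset.filter_erase, Finset.erase_eq_of_notMem (by simp [h])]

lemma sgn_erase_of_lt {j k : Fin m} (h : j < k) {I : Finset (Fin m)} (hj : j ∈ I) :
    sgn m k (I.erase j) = -sgn m k I := by
  unfold sgn
  rw [Finset.filter_erase, Finset.card_erase_of_mem (by simp [h, hj])]
  have hc : 1 ≤ (I.filter (fun i => i < k)).card :=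
    Finset.card_pos.2 ⟨j, by simp [hj, h]⟩
  set c := (I.filter (fun i => i < k)).card with hcdef
  calc ((-1:ℝ)) ^ (c - 1) = -((-1:ℝ) ^ (c-1) * (-1)) := by ring
  _ = -(-1:ℝ)^(c-1+1) := by rw [pow_succ]
  _ = -(-1:ℝ)^c := by rw [Nat.sub_add_cancel hc]

lemma sgn_insert_of_not_lt {j k : Fin m} (h : ¬ j < k) (I : Finset (Fin m)) :
    sgn m k (insert j I) = sgn m k I := by
  unfold sgn; rw [Finset.filter_insert, if_neg h]

lemma sgn_insert_of_lt {j k : Fin m} (h : j < k) {I : Finset (Fin m)} (hj : j ∉ I) :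
    sgn m k (insert j I) = -sgn m k I := by
  unfold sgn
  rw [Finset.filter_insert, if_pos h,
    Finset.card_insert_of_notMem (fun hx => hj (Finset.mem_filter.1 hx).1), pow_succ]
  ring

lemma sgn_erase_self (j : Fin m) (I : Finset (Fin m)) : sgn m j (I.erase j) = sgn m j I :=
  sgn_erase_of_not_lt (lt_irrefl j) I

lemma sgn_insert_self (j : Fin m) (I : Finset (Fin m)) : sgn m j (insert j I) = sgn m j I :=
  sgn_insert_of_not_lt (lt_irrefl j) I

lemma wedge_apply (j : Fin m) (P : PForm m) (I : Finset (Fin m)) :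
    wedgeOp m j P I = if j ∈ I then sgn m j I • P (I.erase j) else 0 := rfl

lemma contr_apply (j : Fin m) (P : PForm m) (I : Finset (Fin m)) :
    contrOp m j P I = if j ∈ I then 0 else sgn m j I • P (insert j I) := rfl

lemma wedge_contr (j k : Fin m) :
    wedgeOp m j * contrOp m k + contrOp m k * wedgeOp m j
      = if j = k then (1 : PForm m →ₗ[ℝ] PForm m) else 0 := by
  refine LinearMap.ext fun P => funext fun I => ?_
  simp only [LinearMap.add_apply, Module.End.mul_apply, Pi.add_apply, wedge_apply, contr_apply]
  by_cases hjk : j = k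
  · subst hjk
    rw [if_pos rfl]
    by_cases h : j ∈ I
    · simp only [h, if_pos, Module.End.one_apply]
      simp [Finset.insert_erase h, sgn_erase_self, smul_smul, sgn_sq]
    · simp only [h, if_neg, Module.End.one_apply]
      simp [h, Finset.erase_insert h, sgn_insert_self, smul_smul, sgn_sq]
  · rw [if_neg hjk]
    by_cases hj : j ∈ I <;> by_cases hk : k ∈ I
    · simp [hj, hk, Ne.symm hjk]
    · -- interesting case
      have hmem : k ∉ I.erase j := fun hx => hk (Finset.mem_erase.1 hx).2
      have hmem2 : j ∈ insert k I := Finset.mem_insert_of_mem hj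
      simp only [hj, hk, hmem, hmem2, if_pos, if_neg, if_true, if_false, not_false_iff,
        smul_zero, Pi.zero_apply, LinearMap.zero_apply]
      have hset : insert k (I.erase j) = (insert k I).erase j := by
        ext i; simp only [Finset.mem_insert, Finset.mem_erase]
        constructor
        · rintro (rfl | ⟨hne, hi⟩)
          · exact ⟨Ne.symm hjk, Or.inl rfl⟩
          · exact ⟨hne, Or.inr hi⟩
        · rintro ⟨hne, (rfl | hi)⟩
          · exact Or.inl rfl
          · exact Or.inr ⟨hne, hi⟩
      rw [hset, smul_smul, smul_smul, ← add_smul]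
      have hscal : sgn m j I * sgn m k (I.erase j) + sgn m k I * sgn m j (insert k I) = 0 := by
        rcases lt_or_gt_of_ne hjk with h | h
        · rw [sgn_erase_of_lt h hj, sgn_insert_of_not_lt (lt_asymm h)]
          ring
        · rw [sgn_erase_of_not_lt (lt_asymm h), sgn_insert_of_lt h hk]
          ring
      rw [hscal, zero_smul]
    · simp [hj, hk, hjk]
    · simp [hj, hk, hjk]

lemma wedge_wedge (j k : Fin m) :
    wedgeOp m j * wedgeOp m k + wedgeOp m k * wedgeOp m j = 0 := by
  refine LinearMap.ext fun P => funext fun I => ?_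
  simp only [LinearMap.add_apply, Module.End.mul_apply, Pi.add_apply, wedge_apply,
    LinearMap.zero_apply, Pi.zero_apply]
  by_cases hjk : j = k
  · subst hjk; by_cases h : j ∈ I <;> simp [h]
  · by_cases hj : j ∈ I <;> by_cases hk : k ∈ I
    · have h1 : k ∈ I.erase j := Finset.mem_erase.2 ⟨Ne.symm hjk, hk⟩
      have h2 : j ∈ I.erase k := Finset.mem_erase.2 ⟨hjk, hj⟩
      simp only [hj, hk, h1, h2, if_pos]
      have hset : (I.erase j).erase k = (I.erase k).erase j := by
        ext i; simp only [Finset.mem_erase]; tauto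
      rw [hset, smul_smul, smul_smul, ← add_smul]
      have hscal : sgn m j I * sgn m k (I.erase j) + sgn m k I * sgn m j (I.erase k) = 0 := by
        rcases lt_or_gt_of_ne hjk with h | h
        · rw [sgn_erase_of_lt h hj, sgn_erase_of_not_lt (lt_asymm h)]; ring
        · rw [sgn_erase_of_not_lt (lt_asymm h), sgn_erase_of_lt h hk]; ring
      rw [hscal, zero_smul]
    · have h1 : k ∉ I.erase j := fun hx => hk (Finset.mem_erase.1 hx).2
      simp [hj, hk, h1]
    · have h2 : j ∉ I.erase k := fun hx => hj (Finset.mem_erase.1 hx).2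
      simp [hj, hk, h2]
    · simp [hj, hk]

lemma contr_contr (j k : Fin m) :
    contrOp m j * contrOp m k + contrOp m k * contrOp m j = 0 := by
  refine LinearMap.ext fun P => funext fun I => ?_
  simp only [LinearMap.add_apply, Module.End.mul_apply, Pi.add_apply, contr_apply,
    LinearMap.zero_apply, Pi.zero_apply]
  by_cases hjk : j = k
  · subst hjk; by_cases h : j ∈ I <;> simp [h]
  · by_cases hj : j ∈ I <;> by_cases hk : k ∈ I
    · simp [hj, hk]
    · have h1 : j ∈ insert k I := Finset.mem_insert_of_mem hj
      simp [hj, hk, h1]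
    · have h1 : k ∈ insert j I := Finset.mem_insert_of_mem hk
      simp [hj, hk, h1]
    · have h1 : k ∉ insert j I := by
        simp only [Finset.mem_insert]; rintro (rfl | h) <;> [exact hjk rfl; exact hk h]
      have h2 : j ∉ insert k I := by
        simp only [Finset.mem_insert]; rintro (rfl | h) <;> [exact hjk rfl; exact hj h]
      simp only [hj, hk, h1, h2, if_neg, not_false_iff]
      have hset : insert k (insert j I) = insert j (insert k I) := Finset.insert_comm _ _ _
      rw [hset, smul_smul, smul_smul, ← add_smul]
      have hscal : sgn m j I * sgn m k (insert j I) + sgn m k I * sgn m j (insert k I) = 0 := by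
        rcases lt_or_gt_of_ne hjk with h | h
        · rw [sgn_insert_of_lt h hj, sgn_insert_of_not_lt (lt_asymm h)]; ring
        · rw [sgn_insert_of_not_lt (lt_asymm h), sgn_insert_of_lt h hk]; ring
      rw [hscal, zero_smul]

lemma mulX_apply (j : Fin m) (P : PForm m) (I : Finset (Fin m)) :
    mulXOp m j P I = X j * P I := rfl

lemma pderivOp_apply (j : Fin m) (P : PForm m) (I : Finset (Fin m)) :
    pderivOp m j P I = pderiv j (P I) := rfl

lemma wedge_mulX (j k : Fin m) : wedgeOp m j * mulXOp m k = mulXOp m k * wedgeOp m j := by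
  refine LinearMap.ext fun P => funext fun I => ?_
  simp only [Module.End.mul_apply, wedge_apply, mulX_apply]
  by_cases h : j ∈ I <;> simp [h, mul_smul_comm]

lemma contr_mulX (j k : Fin m) : contrOp m j * mulXOp m k = mulXOp m k * contrOp m j := by
  refine LinearMap.ext fun P => funext fun I => ?_
  simp only [Module.End.mul_apply, contr_apply, mulX_apply]
  by_cases h : j ∈ I <;> simp [h, mul_smul_comm]

lemma wedge_pderiv (j k : Fin m) : wedgeOp m j * pderivOp m k = pderivOp m k * wedgeOp m j := by
  refine LinearMap.ext fun P => funext fun I => ?_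
  simp only [Module.End.mul_apply, wedge_apply, pderivOp_apply]
  by_cases h : j ∈ I <;> simp [h, map_smul]

lemma contr_pderiv (j k : Fin m) : contrOp m j * pderivOp m k = pderivOp m k * contrOp m j := by
  refine LinearMap.ext fun P => funext fun I => ?_
  simp only [Module.End.mul_apply, contr_apply, pderivOp_apply]
  by_cases h : j ∈ I <;> simp [h, map_smul]

lemma p_m_comm (j k : Fin m) :
    pderivOp m j * mulXOp m k
      = mulXOp m k * pderivOp m j + if j = k then (1 : PForm m →ₗ[ℝ] PForm m) else 0 := by
  by_cases h : j = k
  · subst h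
    rw [if_pos rfl]
    refine LinearMap.ext fun P => funext fun I => ?_
    simp only [Module.End.mul_apply, LinearMap.add_apply, Pi.add_apply, mulX_apply,
      pderivOp_apply, Module.End.one_apply]
    rw [pderiv_mul, pderiv_X_self]
    ring
  · rw [if_neg h, add_zero]
    refine LinearMap.ext fun P => funext fun I => ?_
    simp only [Module.End.mul_apply, mulX_apply, pderivOp_apply]
    rw [pderiv_mul, pderiv_X_of_ne (Ne.symm h)]
    ring

lemma pderiv_poly_comm (j k : Fin m) (p : MvPolynomial (Fin m) ℝ) :
    pderiv j (pderiv k p) = pderiv k (pderiv j p) := by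
  induction p using MvPolynomial.induction_on' with
  | add p q hp hq => simp [hp, hq]
  | monomial s a =>
    simp only [pderiv_monomial]
    by_cases hjk : j = k
    · subst hjk; rfl
    · have h1 : s - Finsupp.single k 1 - Finsupp.single j 1
          = s - Finsupp.single j 1 - Finsupp.single k 1 := by
        ext i
        simp only [Finsupp.tsub_apply, Finsupp.single_apply]
        split_ifs <;> omega
      have h2 : ((s - Finsupp.single k 1 : Fin m →₀ ℕ)) j = s j := by
        rw [Finsupp.tsub_apply, Finsupp.single_apply, if_neg (Ne.symm hjk)]
        omega
      have h3 : ((s - Finsupp.single j 1 : Fin m →₀ ℕ)) k = s k := by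
        rw [Finsupp.tsub_apply, Finsupp.single_apply, if_neg hjk]
        omega
      rw [h1, h2, h3]
      congr 1
      ring

lemma p_p_comm (j k : Fin m) : pderivOp m j * pderivOp m k = pderivOp m k * pderivOp m j := by
  refine LinearMap.ext fun P => funext fun I => ?_
  simp only [Module.End.mul_apply, pderivOp_apply]
  exact pderiv_poly_comm j k (P I)

/-- Clifford generator `e_j = dx_j∧ - dx_j⌟`. -/
def Ee (m : ℕ) (j : Fin m) : PForm m →ₗ[ℝ] PForm m := wedgeOp m j - contrOp m j

lemma E_anti (j k : Fin m) :
    Ee m j * Ee m k + Ee m k * Ee m j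
      = if j = k then (-2 : PForm m →ₗ[ℝ] PForm m) else 0 := by
  have h1 := wedge_wedge (m := m) j k
  have h2 := contr_contr (m := m) j k
  have h3 := wedge_contr (m := m) j k
  have h4 := wedge_contr (m := m) k j
  have expand : Ee m j * Ee m k + Ee m k * Ee m j
      = (wedgeOp m j * wedgeOp m k + wedgeOp m k * wedgeOp m j)
        + (contrOp m j * contrOp m k + contrOp m k * contrOp m j)
        - ((wedgeOp m j * contrOp m k + contrOp m k * wedgeOp m j)
           + (wedgeOp m k * contrOp m j + contrOp m j * wedgeOp m k)) := by
    unfold Ee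
    simp only [sub_mul, mul_sub]
    abel
  rw [expand, h1, h2, h3, h4]
  by_cases h : j = k
  · subst h
    rw [if_pos rfl, if_pos rfl, zero_add, zero_sub, one_add_one_eq_two]
  · rw [if_neg h, if_neg h, if_neg (Ne.symm h)]
    simp

lemma E_sq (j : Fin m) : Ee m j * Ee m j = -1 := by
  have h := E_anti (m := m) j j
  rw [if_pos rfl] at h
  have h2 : (2:ℝ) • (Ee m j * Ee m j) = (2:ℝ) • (-1 : PForm m →ₗ[ℝ] PForm m) := by
    rw [two_smul, two_smul, h, ← neg_add, one_add_one_eq_two]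
  have h3 := congrArg (fun y => ((2:ℝ)⁻¹) • y) h2
  simp only [smul_smul] at h3
  norm_num at h3
  exact h3

lemma E_m_comm (j k : Fin m) : Ee m j * mulXOp m k = mulXOp m k * Ee m j := by
  unfold Ee; rw [sub_mul, mul_sub, wedge_mulX, contr_mulX]

lemma E_p_comm (j k : Fin m) : pderivOp m j * Ee m k = Ee m k * pderivOp m j := by
  unfold Ee; rw [mul_sub, sub_mul, wedge_pderiv, contr_pderiv]

lemma E_m_comm' (j k : Fin m) (Z : PForm m →ₗ[ℝ] PForm m) :
    Ee m j * (mulXOp m k * Z) = mulXOp m k * (Ee m j * Z) := by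
  rw [← mul_assoc, E_m_comm, mul_assoc]

lemma E_p_comm' (j k : Fin m) (Z : PForm m →ₗ[ℝ] PForm m) :
    pderivOp m j * (Ee m k * Z) = Ee m k * (pderivOp m j * Z) := by
  rw [← mul_assoc, E_p_comm, mul_assoc]

lemma E_sq' (j : Fin m) (Z : PForm m →ₗ[ℝ] PForm m) :
    Ee m j * (Ee m j * Z) = -Z := by
  rw [← mul_assoc, E_sq]
  exact LinearMap.ext fun P => rfl

lemma E_anti' {j k : Fin m} (h : j ≠ k) (Z : PForm m →ₗ[ℝ] PForm m) :
    Ee m k * (Ee m j * Z) = -(Ee m j * (Ee m k * Z)) := by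
  have h1 := E_anti (m := m) j k
  rw [if_neg h] at h1
  have h2 : Ee m k * Ee m j = -(Ee m j * Ee m k) := by
    rw [eq_neg_iff_add_eq_zero, add_comm]; exact h1
  rw [← mul_assoc, h2]
  exact LinearMap.ext fun P => rfl

lemma D_eq : dOp m + dStarOp m = ∑ j, Ee m j * pderivOp m j := by
  have h : ∑ j, Ee m j * pderivOp m j
      = ∑ j, (wedgeOp m j ∘ₗ pderivOp m j) - ∑ j, (contrOp m j ∘ₗ pderivOp m j) := by
    rw [← Finset.sum_sub_distrib]
    refine Finset.sum_congr rfl fun j _ => ?_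
    rw [Ee, sub_mul, Module.End.mul_eq_comp, Module.End.mul_eq_comp]
  rw [h]
  simp only [dOp, dStarOp]
  abel

lemma X_eq : xOp m + xStarOp m = -∑ j, mulXOp m j * Ee m j := by
  have h : ∑ j, mulXOp m j * Ee m j
      = ∑ j, (mulXOp m j ∘ₗ wedgeOp m j) - ∑ j, (mulXOp m j ∘ₗ contrOp m j) := by
    rw [← Finset.sum_sub_distrib]
    refine Finset.sum_congr rfl fun j _ => ?_
    rw [Ee, mul_sub, Module.End.mul_eq_comp, Module.End.mul_eq_comp]
  rw [h]
  simp only [xOp, xStarOp]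
  abel

lemma mul_neg' (f g : PForm m →ₗ[ℝ] PForm m) : f * -g = -(f * g) :=
  LinearMap.ext fun P => by simp [Module.End.mul_apply]

lemma neg_mul' (f g : PForm m →ₗ[ℝ] PForm m) : (-f) * g = -(f * g) :=
  LinearMap.ext fun P => rfl

lemma sum_p_sq : ∑ j : Fin m, pderivOp m j * pderivOp m j = lapOp m := by
  rw [lapOp]
  exact Finset.sum_congr rfl fun j _ => Module.End.mul_eq_comp _ _

lemma sum_m_p : ∑ j : Fin m, mulXOp m j * pderivOp m j = eulerOp m := by
  rw [eulerOp]
  exact Finset.sum_congr rfl fun j _ => Module.End.mul_eq_comp _ _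

lemma half_cancel {x y : PForm m →ₗ[ℝ] PForm m} (h : x + x = y + y) : x = y := by
  have h2 : (2:ℝ) • x = (2:ℝ) • y := by rw [two_smul, two_smul]; exact h
  have h3 := congrArg (fun z => ((2:ℝ)⁻¹) • z) h2
  simp only [smul_smul] at h3
  norm_num at h3
  exact h3

lemma Dsq : (dOp m + dStarOp m) * (dOp m + dStarOp m) = -(lapOp m) := by
  have key : ∀ j k : Fin m, (Ee m j * pderivOp m j) * (Ee m k * pderivOp m k)
      = Ee m j * (Ee m k * (pderivOp m j * pderivOp m k)) := fun j k => by
    rw [mul_assoc, E_p_comm']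
  have pair : ∀ j k : Fin m,
      Ee m j * (Ee m k * (pderivOp m j * pderivOp m k))
        + Ee m k * (Ee m j * (pderivOp m k * pderivOp m j))
      = if j = k then -(pderivOp m k * pderivOp m k) + -(pderivOp m k * pderivOp m k)
        else 0 := by
    intro j k
    by_cases h : j = k
    · subst h
      rw [if_pos rfl, E_sq']
    · rw [if_neg h, p_p_comm k j, E_anti' h]
      simp
  have hmain : (∑ j, Ee m j * pderivOp m j) * (∑ k, Ee m k * pderivOp m k)
      = ∑ j, ∑ k, Ee m j * (Ee m k * (pderivOp m j * pderivOp m k)) := by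
    rw [Finset.sum_mul_sum]
    exact Finset.sum_congr rfl fun j _ => Finset.sum_congr rfl fun k _ => key j k
  set S := ∑ j, ∑ k, Ee m j * (Ee m k * (pderivOp m j * pderivOp m k)) with hS
  have hswap : S = ∑ j, ∑ k, Ee m k * (Ee m j * (pderivOp m k * pderivOp m j)) := by
    rw [hS, Finset.sum_comm]
  have hSS : S + S = -(lapOp m) + -(lapOp m) := by
    calc S + S
        = ∑ j, (∑ k, Ee m j * (Ee m k * (pderivOp m j * pderivOp m k))
          + ∑ k, Ee m k * (Ee m j * (pderivOp m k * pderivOp m j))) := by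
          rw [Finset.sum_add_distrib, ← hS, ← hswap]
      _ = ∑ j, ∑ k, (Ee m j * (Ee m k * (pderivOp m j * pderivOp m k))
          + Ee m k * (Ee m j * (pderivOp m k * pderivOp m j))) := by
          refine Finset.sum_congr rfl fun j _ => ?_
          rw [Finset.sum_add_distrib]
      _ = ∑ j, ∑ k, (if j = k then -(pderivOp m k * pderivOp m k)
            + -(pderivOp m k * pderivOp m k) else 0) := by
          exact Finset.sum_congr rfl fun j _ => Finset.sum_congr rfl fun k _ => pair j k
      _ = ∑ j, (-(pderivOp m j * pderivOp m j) + -(pderivOp m j * pderivOp m j)) := by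
          refine Finset.sum_congr rfl fun j _ => ?_
          rw [Finset.sum_ite_eq]
          simp
      _ = -(lapOp m) + -(lapOp m) := by
          rw [Finset.sum_add_distrib, Finset.sum_neg_distrib, sum_p_sq]
  rw [D_eq, hmain]
  exact half_cancel hSS

lemma DX_XD : (dOp m + dStarOp m) * (xOp m + xStarOp m)
      + (xOp m + xStarOp m) * (dOp m + dStarOp m)
    = (m:ℝ) • (1 : PForm m →ₗ[ℝ] PForm m) + (2:ℝ) • eulerOp m := by
  have pair : ∀ j k : Fin m,
      (Ee m j * pderivOp m j) * (mulXOp m k * Ee m k)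
        + (mulXOp m k * Ee m k) * (Ee m j * pderivOp m j)
      = if j = k then -(mulXOp m k * pderivOp m k)
          + (-(mulXOp m k * pderivOp m k) + (-1)) else 0 := by
    intro j k
    have step1 : (Ee m j * pderivOp m j) * (mulXOp m k * Ee m k)
        = Ee m j * ((pderivOp m j * mulXOp m k) * Ee m k) := by
      rw [mul_assoc, mul_assoc]
    have step2 : (mulXOp m k * Ee m k) * (Ee m j * pderivOp m j)
        = mulXOp m k * (Ee m k * (Ee m j * pderivOp m j)) := by
      rw [mul_assoc]
    by_cases h : j = k
    · subst h
      rw [if_pos rfl, step1, step2, p_m_comm, if_pos rfl, add_mul, one_mul, mul_add]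
      -- Ee j * ((mX j * p j) * Ee j) + Ee j * Ee j + mX j * (Ee j * (Ee j * p j)) = ...
      rw [mul_assoc (mulXOp m j), E_m_comm', E_p_comm, E_sq', E_sq, mul_neg']
      abel
    · rw [if_neg h, step1, step2, p_m_comm, if_neg h, add_zero]
      rw [mul_assoc (mulXOp m k), E_m_comm', E_p_comm, E_anti' h, mul_neg']
      abel
  have hmain : (∑ j, Ee m j * pderivOp m j) * (∑ k, mulXOp m k * Ee m k)
        + (∑ k, mulXOp m k * Ee m k) * (∑ j, Ee m j * pderivOp m j)
      = ∑ j, ∑ k, ((Ee m j * pderivOp m j) * (mulXOp m k * Ee m k)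
          + (mulXOp m k * Ee m k) * (Ee m j * pderivOp m j)) := by
    rw [Finset.sum_mul_sum, Finset.sum_mul_sum]
    rw [Finset.sum_comm (f := fun k j => (mulXOp m k * Ee m k) * (Ee m j * pderivOp m j))]
    rw [← Finset.sum_add_distrib]
    exact Finset.sum_congr rfl fun j _ => (Finset.sum_add_distrib).symm
  have collapse : ∑ j, ∑ k, ((Ee m j * pderivOp m j) * (mulXOp m k * Ee m k)
          + (mulXOp m k * Ee m k) * (Ee m j * pderivOp m j))
      = -(eulerOp m) + (-(eulerOp m) + -((m:ℕ) • (1 : PForm m →ₗ[ℝ] PForm m))) := by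
    calc ∑ j, ∑ k, ((Ee m j * pderivOp m j) * (mulXOp m k * Ee m k)
          + (mulXOp m k * Ee m k) * (Ee m j * pderivOp m j))
        = ∑ j, ∑ k, (if j = k then -(mulXOp m k * pderivOp m k)
            + (-(mulXOp m k * pderivOp m k) + (-1)) else 0) := by
          exact Finset.sum_congr rfl fun j _ => Finset.sum_congr rfl fun k _ => pair j k
      _ = ∑ j, (-(mulXOp m j * pderivOp m j)
            + (-(mulXOp m j * pderivOp m j) + (-1))) := by
          refine Finset.sum_congr rfl fun j _ => ?_
          rw [Finset.sum_ite_eq]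
          simp
      _ = -(eulerOp m) + (-(eulerOp m) + -((m:ℕ) • (1 : PForm m →ₗ[ℝ] PForm m))) := by
          rw [Finset.sum_add_distrib, Finset.sum_add_distrib, Finset.sum_neg_distrib,
            Finset.sum_neg_distrib, sum_m_p, Finset.sum_const, Finset.card_univ,
            Fintype.card_fin]
  rw [D_eq, X_eq, mul_neg', neg_mul', ← neg_add, hmain, collapse]
  rw [Nat.cast_smul_eq_nsmul ℝ m (1 : PForm m →ₗ[ℝ] PForm m), two_smul]
  abel

lemma degree_eq_sum_univ (d : Fin m →₀ ℕ) : d.degree = ∑ j, d j :=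
  Finset.sum_subset (Finset.subset_univ _) (fun x _ hx => Finsupp.notMem_support_iff.1 hx)

lemma X_mul_pderiv_monomial (j : Fin m) (d : Fin m →₀ ℕ) (a : ℝ) :
    X j * pderiv j (monomial d a) = ((d j : ℝ)) • monomial d a := by
  rw [pderiv_monomial]
  by_cases h : d j = 0
  · simp [h]
  · have hX : (X j : MvPolynomial (Fin m) ℝ) = monomial (Finsupp.single j 1) 1 := rfl
    rw [hX, monomial_mul, one_mul]
    have hd : Finsupp.single j 1 + (d - Finsupp.single j 1) = d := by
      ext i
      simp only [Finsupp.add_apply, Finsupp.tsub_apply, Finsupp.single_apply]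
      split_ifs with hji
      · subst hji; omega
      · omega
    rw [hd, smul_monomial, smul_eq_mul, mul_comm]

lemma euler_poly {n : ℕ} {p : MvPolynomial (Fin m) ℝ} (hp : p.IsHomogeneous n) :
    ∑ j, X j * pderiv j p = (n : ℝ) • p := by
  conv_lhs => rw [p.as_sum]
  conv_rhs => rw [p.as_sum]
  rw [Finset.smul_sum]
  simp only [map_sum, Finset.mul_sum]
  rw [Finset.sum_comm]
  refine Finset.sum_congr rfl fun d hd => ?_
  rw [Finset.sum_congr rfl fun j _ => X_mul_pderiv_monomial j d _, ← Finset.sum_smul]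
  congr 1
  have h1 : d.degree = n := by
    rw [Finsupp.degree_eq_weight_one]
    exact hp (MvPolynomial.mem_support_iff.mp hd)
  rw [degree_eq_sum_univ] at h1
  rw [← Nat.cast_sum, h1]

lemma isHomogeneous_pderiv {n : ℕ} {p : MvPolynomial (Fin m) ℝ} (hp : p.IsHomogeneous n)
    (j : Fin m) : (pderiv j p).IsHomogeneous (n - 1) := by
  have hrep : pderiv j p
      = ∑ d ∈ p.support, monomial (d - Finsupp.single j 1) (coeff d p * d j) := by
    conv_lhs => rw [p.as_sum]
    rw [map_sum]
    exact Finset.sum_congr rfl fun d _ => pderiv_monomial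
  rw [hrep]
  apply IsHomogeneous.sum
  intro d hd
  by_cases h : d j = 0
  · have hz : (coeff d p * ((d j : ℕ) : ℝ)) = 0 := by rw [h]; simp
    rw [hz, monomial_zero]
    exact isHomogeneous_zero _ _ _
  · apply isHomogeneous_monomial
    have h1 : d.degree = n := by
      rw [Finsupp.degree_eq_weight_one]
      exact hp (MvPolynomial.mem_support_iff.mp hd)
    rw [degree_eq_sum_univ] at h1
    rw [degree_eq_sum_univ]
    have key : ∀ i ∈ Finset.univ.erase j,
        ((d - Finsupp.single j 1 : Fin m →₀ ℕ)) i = d i := by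
      intro i hi
      have hij : i ≠ j := (Finset.mem_erase.mp hi).1
      rw [Finsupp.tsub_apply, Finsupp.single_apply, if_neg (fun hc => hij hc.symm)]
      omega
    have hj' : ((d - Finsupp.single j 1 : Fin m →₀ ℕ)) j = d j - 1 := by
      rw [Finsupp.tsub_apply, Finsupp.single_apply, if_pos rfl]
    have e1 : ((d - Finsupp.single j 1 : Fin m →₀ ℕ)) j
          + ∑ i ∈ Finset.univ.erase j, ((d - Finsupp.single j 1 : Fin m →₀ ℕ)) i
        = ∑ i, ((d - Finsupp.single j 1 : Fin m →₀ ℕ)) i :=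
      Finset.add_sum_erase _ _ (Finset.mem_univ j)
    have e2 : d j + ∑ i ∈ Finset.univ.erase j, d i = ∑ i, d i :=
      Finset.add_sum_erase _ _ (Finset.mem_univ j)
    have e3 : ∑ i ∈ Finset.univ.erase j, ((d - Finsupp.single j 1 : Fin m →₀ ℕ)) i
        = ∑ i ∈ Finset.univ.erase j, d i := Finset.sum_congr rfl key
    omega

lemma isHomForm_zero (k : ℕ) : IsHomForm m k (0 : PForm m) :=
  fun _ => isHomogeneous_zero _ _ _

lemma homAdd {k : ℕ} {P Q : PForm m} (hP : IsHomForm m k P) (hQ : IsHomForm m k Q) :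
    IsHomForm m k (P + Q) := fun I => (hP I).add (hQ I)

lemma homSub {k : ℕ} {P Q : PForm m} (hP : IsHomForm m k P) (hQ : IsHomForm m k Q) :
    IsHomForm m k (P - Q) := fun I => (hP I).sub (hQ I)

lemma homSmul {k : ℕ} (c : ℝ) {P : PForm m} (hP : IsHomForm m k P) :
    IsHomForm m k (c • P) :=
  fun I => (homogeneousSubmodule _ ℝ k).smul_mem c (hP I)

lemma homWedge {k : ℕ} {P : PForm m} (h : IsHomForm m k P) (j : Fin m) :
    IsHomForm m k (wedgeOp m j P) := by
  intro I
  rw [wedge_apply]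
  split_ifs
  · exact (homogeneousSubmodule _ ℝ k).smul_mem _ (h _)
  · exact isHomogeneous_zero _ _ _

lemma homContr {k : ℕ} {P : PForm m} (h : IsHomForm m k P) (j : Fin m) :
    IsHomForm m k (contrOp m j P) := by
  intro I
  rw [contr_apply]
  split_ifs
  · exact isHomogeneous_zero _ _ _
  · exact (homogeneousSubmodule _ ℝ k).smul_mem _ (h _)

lemma homEe {k : ℕ} {P : PForm m} (h : IsHomForm m k P) (j : Fin m) :
    IsHomForm m k (Ee m j P) := by
  intro I
  have hI : Ee m j P I = wedgeOp m j P I - contrOp m j P I := rfl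
  rw [hI]
  exact ((homWedge h j) I).sub ((homContr h j) I)

lemma homMulX {k : ℕ} {P : PForm m} (h : IsHomForm m k P) (j : Fin m) :
    IsHomForm m (k + 1) (mulXOp m j P) := by
  intro I
  rw [mulX_apply]
  exact (Nat.add_comm 1 k) ▸ ((isHomogeneous_X ℝ j).mul (h I))

lemma homPDeriv {k : ℕ} {P : PForm m} (h : IsHomForm m k P) (j : Fin m) :
    IsHomForm m (k - 1) (pderivOp m j P) :=
  fun I => isHomogeneous_pderiv (h I) j

lemma sumOp_apply (f : Fin m → (PForm m →ₗ[ℝ] PForm m)) (P : PForm m) (I : Finset (Fin m)) :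
    (∑ j, f j) P I = ∑ j, f j P I := by
  rw [LinearMap.sum_apply]
  exact Finset.sum_apply _ _ _

lemma homD {k : ℕ} {P : PForm m} (h : IsHomForm m k P) :
    IsHomForm m (k - 1) ((dOp m + dStarOp m) P) := by
  intro I
  rw [D_eq, sumOp_apply]
  refine IsHomogeneous.sum _ _ _ fun j _ => ?_
  have hterm : (Ee m j * pderivOp m j) P I = Ee m j (pderivOp m j P) I := rfl
  rw [hterm]
  exact homEe (homPDeriv h j) j I

lemma homX {k : ℕ} {P : PForm m} (h : IsHomForm m k P) :
    IsHomForm m (k + 1) ((xOp m + xStarOp m) P) := by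
  intro I
  rw [X_eq]
  have hneg : ((-∑ j, mulXOp m j * Ee m j) P) I = -((∑ j, mulXOp m j * Ee m j) P I) := rfl
  rw [hneg, sumOp_apply]
  refine IsHomogeneous.neg ?_
  refine IsHomogeneous.sum _ _ _ fun j _ => ?_
  have hterm : (mulXOp m j * Ee m j) P I = mulXOp m j (Ee m j P) I := rfl
  rw [hterm]
  exact homMulX (homEe h j) j I

lemma euler_form {k : ℕ} {P : PForm m} (h : IsHomForm m k P) :
    eulerOp m P = (k : ℝ) • P := by
  funext I
  have h1 : eulerOp m P I = ∑ j, X j * pderiv j (P I) := by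
    rw [eulerOp, sumOp_apply]
    exact Finset.sum_congr rfl fun j _ => rfl
  rw [h1, euler_poly (h I)]
  rfl

lemma X_zero (h : m = 0) : xOp m + xStarOp m = 0 := by
  subst h
  rw [X_eq]
  simp

lemma hom_zero_of_fin0 {k : ℕ} (hk : k ≠ 0) {p : MvPolynomial (Fin 0) ℝ}
    (hp : p.IsHomogeneous k) : p = 0 := by
  ext d
  rw [coeff_zero]
  by_contra hc
  have hw := hp hc
  have hd : d = 0 := Subsingleton.elim d 0
  rw [hd, map_zero] at hw
  exact hk hw.symm

end KL

end

/-- `Ker_k Δ = ℳ_k ⊕ (x+x*)ℳ_{k-1}`. -/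
theorem ker_lap_decomp (m k : ℕ) (hk : 1 ≤ k) :
    (∀ P : PForm m, (IsHomForm m k P ∧ lapOp m P = 0) ↔
      ∃ A ∈ Mk m k, ∃ B ∈ Mk m (k - 1), P = A + (xOp m + xStarOp m) B) ∧
    (∀ A ∈ Mk m k, ∀ B ∈ Mk m (k - 1),
      A + (xOp m + xStarOp m) B = 0 → A = 0 ∧ (xOp m + xStarOp m) B = 0) := by
  have hDsq : ∀ Q : PForm m, (dOp m + dStarOp m) ((dOp m + dStarOp m) Q) = -(lapOp m Q) := by
    intro Q
    have h := congrArg (fun f : PForm m →ₗ[ℝ] PForm m => f Q) (KL.Dsq (m := m))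
    simpa using h
  have hanti : ∀ (l : ℕ) (B : PForm m), IsHomForm m l B →
      (dOp m + dStarOp m) ((xOp m + xStarOp m) B)
        + (xOp m + xStarOp m) ((dOp m + dStarOp m) B)
      = ((m:ℝ) + 2*((l:ℕ):ℝ)) • B := by
    intro l B hB
    have h := congrArg (fun f : PForm m →ₗ[ℝ] PForm m => f B) (KL.DX_XD (m := m))
    have h' : (dOp m + dStarOp m) ((xOp m + xStarOp m) B)
        + (xOp m + xStarOp m) ((dOp m + dStarOp m) B)
        = (m:ℝ) • B + (2:ℝ) • (eulerOp m B) := h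
    rw [h', KL.euler_form hB, smul_smul, ← add_smul]
  constructor
  · intro P
    constructor
    · rintro ⟨hHom, hLap⟩
      by_cases hc : (m:ℝ) + 2*(((k-1:ℕ)):ℝ) = 0
      · have hm : m = 0 := by
          have h1 : (0:ℝ) ≤ (m:ℝ) := Nat.cast_nonneg m
          have h2 : (0:ℝ) ≤ ((k-1:ℕ):ℝ) := Nat.cast_nonneg _
          have h3 : (m:ℝ) = 0 := by linarith
          exact_mod_cast h3
        have hP : P = 0 := by
          funext I
          subst hm
          exact KL.hom_zero_of_fin0 (by omega) (hHom I)
        refine ⟨0, ⟨KL.isHomForm_zero k, map_zero _⟩, 0, ⟨KL.isHomForm_zero _, map_zero _⟩, ?_⟩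
        rw [hP, map_zero, add_zero]
      · set B := ((m:ℝ) + 2*(((k-1:ℕ)):ℝ))⁻¹ • ((dOp m + dStarOp m) P) with hB
        have hDP_hom : IsHomForm m (k-1) ((dOp m + dStarOp m) P) := KL.homD hHom
        have hB_hom : IsHomForm m (k-1) B := KL.homSmul _ hDP_hom
        have hDB : (dOp m + dStarOp m) B = 0 := by
          rw [hB, map_smul, hDsq P, hLap]
          simp
        have hXB_hom : IsHomForm m k ((xOp m + xStarOp m) B) := by
          have h := KL.homX hB_hom
          rwa [Nat.sub_add_cancel hk] at h
        have hDXB : (dOp m + dStarOp m) ((xOp m + xStarOp m) B) = (dOp m + dStarOp m) P := by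
          have h := hanti (k-1) B hB_hom
          rw [hDB, map_zero, add_zero] at h
          rw [h, hB, smul_smul, mul_inv_cancel₀ hc, one_smul]
        refine ⟨P - (xOp m + xStarOp m) B, ⟨?_, ?_⟩, B, ⟨hB_hom, hDB⟩, (by funext I; simp : P = P - (xOp m + xStarOp m) B + (xOp m + xStarOp m) B)⟩
        · exact KL.homSub hHom hXB_hom
        · rw [map_sub, hDXB, sub_self]
    · rintro ⟨A, ⟨hAh, hAD⟩, B, ⟨hBh, hBD⟩, rfl⟩
      have hXB_hom : IsHomForm m k ((xOp m + xStarOp m) B) := by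
        have h := KL.homX hBh
        rwa [Nat.sub_add_cancel hk] at h
      refine ⟨KL.homAdd hAh hXB_hom, ?_⟩
      have hA : lapOp m A = 0 := by
        have h := hDsq A
        rw [hAD, map_zero] at h
        exact neg_eq_zero.mp h.symm
      have hXB : lapOp m ((xOp m + xStarOp m) B) = 0 := by
        have h := hanti (k-1) B hBh
        rw [hBD, map_zero, add_zero] at h
        have h2 := hDsq ((xOp m + xStarOp m) B)
        rw [h, map_smul, hBD, smul_zero] at h2
        exact neg_eq_zero.mp h2.symm
      rw [map_add, hA, hXB, add_zero]
  · intro A hA B hB h0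
    have hDXB0 : (dOp m + dStarOp m) ((xOp m + xStarOp m) B) = 0 := by
      have h3 := congrArg (fun Q : PForm m => (dOp m + dStarOp m) Q) h0
      simp only [map_add, map_zero] at h3
      rw [hA.2, zero_add] at h3
      exact h3
    have h1 : ((m:ℝ) + 2*(((k-1:ℕ)):ℝ)) • B = 0 := by
      have h := hanti (k-1) B hB.1
      rw [hB.2, map_zero, add_zero] at h
      rw [← h]
      exact hDXB0
    by_cases hc : (m:ℝ) + 2*(((k-1:ℕ)):ℝ) = 0
    · have hm : m = 0 := by
        have hh1 : (0:ℝ) ≤ (m:ℝ) := Nat.cast_nonneg m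
        have hh2 : (0:ℝ) ≤ ((k-1:ℕ):ℝ) := Nat.cast_nonneg _
        have hh3 : (m:ℝ) = 0 := by linarith
        exact_mod_cast hh3
      have hXo : (xOp m + xStarOp m) = 0 := KL.X_zero hm
      constructor
      · rw [hXo] at h0
        simpa using h0
      · simp [hXo]
    · have hB0 : B = 0 := by
        have h2 := congrArg
          (fun Q : PForm m => (((m:ℝ) + 2*(((k-1:ℕ)):ℝ))⁻¹) • Q) h1
        simpa [smul_smul, inv_mul_cancel₀ hc] using h2
      constructor
      · rw [hB0, map_zero, add_zero] at h0
        exact h0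
      · rw [hB0, map_zero]
end
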